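/- Let A be a commutative Noetherian ring and B a commutative Noetherian A-algebra. Let I ⊆ B be an ideal such that B/I is a finitely generated flat A-module. Let p₀ be a prime ideal of A and suppose f ∈ I is an element such that B/fB is a finitely generated A-module and such that the image of I in B ⊗_A κ(p₀) generates the same ideal as the image of f. Then there exists g ∈ A with g ∉ p₀ such that, after inverting g, the ideal I becomes principal generated by f: I · B[1/g] = f · B[1/g], where B[1/g] = B ⊗_A A[1/g]. -/

import Mathlib

open TensorProduct

/-- The residue field `κ(p)` of the prime spectrum point `p`. -/
abbrev residueFieldAt {R : Type*} [CommRing R] (p : PrimeSpectrum R) : Type _ :=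
  IsLocalRing.ResidueField (Localization.AtPrime p.asIdeal)

/-!
Let `N = I/fB ⊆ B/fB`. As `(B/fB)/N = B/I` is flat, `κ(p₀) ⊗ N → κ(p₀) ⊗ B/fB` is injective,
while the fiber hypothesis says that it is zero; so `κ(p₀) ⊗ N = 0`. Since `N` is a finite
`A`-module, Nakayama gives `g ∉ p₀` with `g N = 0`, that is `g I ⊆ fB`, and `g` becomes a unit
in `B[1/g]`.
-/

section

variable {A B : Type*} [CommRing A] [CommRing B] [Algebra A B]

theorem Ideal.map_quotient_mk_restrictScalars_lTensor_injective {I J : Ideal B} (hJI : J ≤ I)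
    [Module.Flat A (B ⧸ I)] (C : Type*) [AddCommGroup C] [Module A C] :
    Function.Injective (((I.map (Ideal.Quotient.mk J)).restrictScalars A).subtype.lTensor C) := by
  refine LinearMap.lTensor_injective_of_exact_of_flat
    (Ideal.Quotient.factorₐ A hJI).toLinearMap (Ideal.Quotient.factor_surjective hJI) _
    (Submodule.injective_subtype _) ?_ C
  intro x
  change Ideal.Quotient.factor hJI x = 0 ↔ _
  rw [Submodule.coe_subtype, Subtype.range_coe, SetLike.mem_coe, Submodule.restrictScalars_mem,
    ← Ideal.Quotient.factor_ker hJI, RingHom.mem_ker]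

theorem Ideal.map_quotient_mk_restrictScalars_lTensor_eq_zero {C : Type*} [CommRing C]
    [Algebra A C] {I J : Ideal B}
    (h : I.map (Algebra.TensorProduct.includeRight : B →ₐ[A] C ⊗[A] B) ≤
      J.map Algebra.TensorProduct.includeRight) :
    ((I.map (Ideal.Quotient.mk J)).restrictScalars A).subtype.lTensor C = 0 := by
  refine TensorProduct.ext' fun c ⟨x, hx⟩ ↦ ?_
  obtain ⟨b, hb, rfl⟩ := (Ideal.mem_map_iff_of_surjective _ Ideal.Quotient.mk_surjective).mp hx
  have hb' : (1 : C) ⊗ₜ[A] Ideal.Quotient.mk J b = 0 := by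
    have hker := Algebra.TensorProduct.lTensor_ker (A := C) (Ideal.Quotient.mkₐ A J)
      (Ideal.Quotient.mkₐ_surjective A J)
    rw [show RingHom.ker (Ideal.Quotient.mkₐ A J) = J from Ideal.Quotient.mkₐ_ker A J] at hker
    have := h (Ideal.mem_map_of_mem _ hb)
    rw [← hker, RingHom.mem_ker] at this
    simpa using this
  calc c ⊗ₜ[A] Ideal.Quotient.mk J b = c • ((1 : C) ⊗ₜ[A] Ideal.Quotient.mk J b) := by
        rw [smul_tmul', smul_eq_mul, mul_one]
    _ = 0 := by rw [hb', smul_zero]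

theorem Ideal.span_algebraMap_mul_le_of_mem_annihilator {I J : Ideal B} {g : A}
    (hg : g ∈ Module.annihilator A ((I.map (Ideal.Quotient.mk J)).restrictScalars A)) :
    Ideal.span {algebraMap A B g} * I ≤ J := by
  rw [Ideal.span_singleton_mul_le_iff]
  intro z hz
  have := congrArg Subtype.val (Module.mem_annihilator.mp hg ⟨_, Ideal.mem_map_of_mem _ hz⟩)
  rwa [← Ideal.Quotient.eq_zero_iff_mem, ← Algebra.smul_def]

end

theorem Module.exists_notMem_mem_annihilator_of_subsingleton_residueField_tensorProduct
    {A M : Type*} [CommRing A] [AddCommGroup M] [Module A M] [Module.Finite A M]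
    (p : PrimeSpectrum A) [Subsingleton (p.asIdeal.ResidueField ⊗[A] M)] :
    ∃ g ∉ p.asIdeal, g ∈ Module.annihilator A M := by
  have hp : p ∉ Module.support A M := by
    rw [Module.mem_support_iff_nontrivial_residueField_tensorProduct]
    exact not_nontrivial _
  rw [Module.mem_support_iff_of_finite, SetLike.not_le_iff_exists] at hp
  obtain ⟨g, hg, hgp⟩ := hp
  exact ⟨g, hgp, hg⟩

theorem Ideal.map_away_le_of_span_singleton_mul_le {B : Type*} [CommRing B] {a : B}
    {I J : Ideal B} (h : Ideal.span {a} * I ≤ J) :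
    I.map (algebraMap B (Localization.Away a)) ≤ J.map (algebraMap B (Localization.Away a)) := by
  have hspan_top : Ideal.map (algebraMap B (Localization.Away a)) (Ideal.span {a}) = ⊤ := by
    rw [Ideal.map_span, Set.image_singleton, Ideal.span_singleton_eq_top]
    exact IsLocalization.Away.algebraMap_isUnit a
  calc I.map (algebraMap B (Localization.Away a))
      = (Ideal.span {a} * I).map (algebraMap B (Localization.Away a)) := by
        rw [Ideal.map_mul, hspan_top, top_mul]
    _ ≤ J.map (algebraMap B (Localization.Away a)) := Ideal.map_mono h

theorem ideal_principal_on_basic_open_general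
    (A : Type*) [CommRing A] [IsNoetherianRing A]
    (B : Type*) [CommRing B] [Algebra A B]
    (I : Ideal B)
    [Module.Flat A (B ⧸ I)]
    (p₀ : PrimeSpectrum A)
    (f : B) (hfI : f ∈ I)
    [Module.Finite A (B ⧸ Ideal.span {f})]
    (hfiber :
      Ideal.map
          (Algebra.TensorProduct.includeRight :
            B →ₐ[A] residueFieldAt p₀ ⊗[A] B) I
        = Ideal.span
            {(Algebra.TensorProduct.includeRight :
              B →ₐ[A] residueFieldAt p₀ ⊗[A] B) f}) :
    ∃ g : A, g ∉ p₀.asIdeal ∧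
      Ideal.map (algebraMap B (Localization.Away (algebraMap A B g))) I
        = Ideal.span {algebraMap B (Localization.Away (algebraMap A B g)) f} := by
  set N := (I.map (Ideal.Quotient.mk (Ideal.span {f}))).restrictScalars A
  have hfiber' : I.map (Algebra.TensorProduct.includeRight : B →ₐ[A] residueFieldAt p₀ ⊗[A] B) ≤
      (Ideal.span {f}).map Algebra.TensorProduct.includeRight := by
    rw [hfiber, Ideal.map_span, Set.image_singleton]
  have : Subsingleton (residueFieldAt p₀ ⊗[A] N) := ⟨fun x y ↦
    Ideal.map_quotient_mk_restrictScalars_lTensor_injective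
      ((Ideal.span_singleton_le_iff_mem I).mpr hfI) _ <| by
        rw [Ideal.map_quotient_mk_restrictScalars_lTensor_eq_zero hfiber', LinearMap.zero_apply,
          LinearMap.zero_apply]⟩
  obtain ⟨g, hgp, hg⟩ :=
    Module.exists_notMem_mem_annihilator_of_subsingleton_residueField_tensorProduct p₀ (M := N)
  refine ⟨g, hgp, le_antisymm ?_ ?_⟩
  · simpa only [Ideal.map_span, Set.image_singleton] using
      Ideal.map_away_le_of_span_singleton_mul_le
        (Ideal.span_algebraMap_mul_le_of_mem_annihilator hg)
  · exact (Ideal.span_singleton_le_iff_mem _).mpr (Ideal.mem_map_of_mem _ hfI)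

/-- Let `A` be a commutative Noetherian ring, `B` a commutative Noetherian `A`-algebra and
`I ⊆ B` an ideal with `B/I` a finitely generated flat `A`-module.  Let `p₀` be a prime of `A`
and `f ∈ I` such that `B/fB` is a finitely generated `A`-module and the image of `I` in the
fiber ring `B ⊗_A κ(p₀)` generates the same ideal as the image of `f`.  Then there is
`g ∈ A`, `g ∉ p₀`, such that `I · B[1/g] = f · B[1/g]`, where `B[1/g] = B ⊗_A A[1/g]` is the
localization of `B` away from the image of `g`. -/
theorem ideal_principal_on_basic_open
    (A : Type*) [CommRing A] [IsNoetherianRing A]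
    (B : Type*) [CommRing B] [Algebra A B] [IsNoetherianRing B]
    (I : Ideal B)
    [Module.Finite A (B ⧸ I)] [Module.Flat A (B ⧸ I)]
    (p₀ : PrimeSpectrum A)
    (f : B) (hfI : f ∈ I)
    [Module.Finite A (B ⧸ Ideal.span {f})]
    (hfiber :
      Ideal.map
          (Algebra.TensorProduct.includeRight :
            B →ₐ[A] residueFieldAt p₀ ⊗[A] B) I
        = Ideal.span
            {(Algebra.TensorProduct.includeRight :
              B →ₐ[A] residueFieldAt p₀ ⊗[A] B) f}) :
    ∃ g : A, g ∉ p₀.asIdeal ∧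
      Ideal.map (algebraMap B (Localization.Away (algebraMap A B g))) I
        = Ideal.span {algebraMap B (Localization.Away (algebraMap A B g)) f} :=
  ideal_principal_on_basic_open_general A B I p₀ f hfI hfiber
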